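/- For each natural number t, let ψ_t(x) = q^{−t}x, ψ_t(y) = q^t y, and let dₙ^{(t)} be the corresponding cohomology-complex differential. Then, with Dₙ := dim Ker d_{n+1}^{(t)} − dim Im dₙ^{(t)} (= dim HHⁿ(Λ, M_t)), one has D_{2t+2} ≠ 0 but Dₙ = 0 for all n > 2t+2. Hence for every N there exists a bimodule M with Ext_{Λᵉ}ⁿ(Λ, M) = 0 for n ≫ 0 but Ext_{Λᵉ}^N-vanishing failing below degree 2t+2, contradicting Auslander's conjecture for Λᵉ. -/

import Mathlib

/-! The image of `dₙ` is spanned by the images of the `eᵢ`, which have pairwise disjoint supports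
in the `xe`/`ye`-rows, together with those `yx eⱼ` that occur with a nonzero coefficient in the
image of `xe_{j-1}` or `ye_j`. As `q` is not a root of unity, for `α = q^{-t}`, `β = q^t` each
coefficient vanishes for at most one explicit index, and both coefficients of `eᵢ` vanish only
if `n = 2t + 1`. Hence `rank dₙ = 2n + 1` for `n > 2t + 2`, whereas for `n = 2t + 2` the row of
`yx e_{t+1}` is missed and `rank d_{2t+2} = 2n`. Rank–nullity gives
`dim Ker d_{n+1} = 4(n+1) - (2n+3) = 2n + 1`. -/

/-- The matrix of the differential `dₙ : Λⁿ → Λ^{n+1}` of the complex computing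
`HH^*(Λ, ₁Λ_ψ)` for `ψ(x) = αx`, `ψ(y) = βy`, in the standard basis
`{eᵢ, xeᵢ, yeᵢ, yxeᵢ}` (encoded by `Fin 4` as `0 ↦ eᵢ, 1 ↦ xeᵢ, 2 ↦ yeᵢ, 3 ↦ yxeᵢ`):
`eᵢ^{n−1} ↦ [1+(−1)ⁿqⁱα]xeᵢⁿ + [q^{n−i−1}+(−1)ⁿβ]ye^n_{i+1}`,
`xeᵢ^{n−1} ↦ [q^{n−i−1}+(−1)^{n+1}qβ]yxe^n_{i+1}`,
`yeᵢ^{n−1} ↦ [−q+(−1)ⁿqⁱα]yxeᵢⁿ`, `yxeᵢ^{n−1} ↦ 0`. -/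
def Dmat (k : Type) [Field k] (q α β : k) (n : ℕ) :
    Matrix (Fin (n + 1) × Fin 4) (Fin n × Fin 4) k := fun jb ia =>
  if jb.2 = 1 ∧ ia.2 = 0 ∧ (jb.1 : ℕ) = (ia.1 : ℕ) then
    1 + (-1 : k) ^ n * q ^ (ia.1 : ℕ) * α
  else if jb.2 = 2 ∧ ia.2 = 0 ∧ (jb.1 : ℕ) = (ia.1 : ℕ) + 1 then
    q ^ (n - (ia.1 : ℕ) - 1) + (-1 : k) ^ n * β
  else if jb.2 = 3 ∧ ia.2 = 1 ∧ (jb.1 : ℕ) = (ia.1 : ℕ) + 1 then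
    q ^ (n - (ia.1 : ℕ) - 1) + (-1 : k) ^ (n + 1) * q * β
  else if jb.2 = 3 ∧ ia.2 = 2 ∧ (jb.1 : ℕ) = (ia.1 : ℕ) then
    -q + (-1 : k) ^ n * q ^ (ia.1 : ℕ) * α
  else 0

noncomputable def dMap (k : Type) [Field k] (q α β : k) (n : ℕ) :
    (Fin n × Fin 4 → k) →ₗ[k] (Fin (n + 1) × Fin 4 → k) :=
  (Dmat k q α β n).mulVecLin

theorem linearIndependent_of_pivot {k ι κ : Type*} [Field k] [Fintype ι] {v : ι → κ → k}
    (p : ι → κ) (hp : ∀ x, v x (p x) ≠ 0) (hv : ∀ x y, y ≠ x → v y (p x) = 0) :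
    LinearIndependent k v := by
  rw [Fintype.linearIndependent_iff]
  intro g hg x
  have hx : ∑ y, g y * v y (p x) = g x * v x (p x) :=
    Finset.sum_eq_single x (fun y _ hyx => by rw [hv x y hyx, mul_zero])
      (fun h => absurd (Finset.mem_univ x) h)
  have h0 := congrFun hg (p x)
  simp only [Finset.sum_apply, Pi.smul_apply, smul_eq_mul, Pi.zero_apply, hx] at h0
  exact (mul_eq_zero.1 h0).resolve_right (hp x)

theorem Pi.single_mem_iff_single_one_mem {k κ : Type*} [Field k] [DecidableEq κ]
    {S : Submodule k (κ → k)} (x : κ) {c : k} (hc : c ≠ 0) :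
    Pi.single x c ∈ S ↔ Pi.single x 1 ∈ S := by
  have hsmul : Pi.single x c = c • (Pi.single x 1 : κ → k) := by
    rw [← Pi.single_smul', smul_eq_mul, mul_one]
  rw [hsmul, Submodule.smul_mem_iff _ hc]

section Powers

variable {k : Type*} [Field k] {q : k}

theorem pow_injective_of_pow_ne_one (hq : q ≠ 0) (hq' : ∀ m : ℕ, 0 < m → q ^ m ≠ 1) :
    Function.Injective fun m : ℕ => q ^ m := by
  have hu : ¬IsOfFinOrder (Units.mk0 q hq) := by
    rw [← Units.isOfFinOrder_val, Units.val_mk0, isOfFinOrder_iff_pow_eq_one]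
    exact fun ⟨m, hm, hqm⟩ => hq' m hm hqm
  intro a b hab
  exact injective_pow_iff_not_isOfFinOrder.2 hu (Units.ext (by simpa using hab))

theorem zpow_neg_natCast_mul_pow (hq : q ≠ 0) (t : ℕ) : q ^ (-(t : ℤ)) * q ^ t = 1 := by
  rw [← zpow_natCast]
  exact zpow_neg_mul_zpow_self _ hq

theorem neg_one_pow_mul_self (n : ℕ) : (-1 : k) ^ n * (-1) ^ n = 1 := by
  rw [← mul_pow, neg_one_mul, neg_neg, one_pow]

end Powers

namespace Dmat

section Columns

variable {k : Type} [Field k] (q α β : k) (n : ℕ)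

def coefA (i : ℕ) : k := 1 + (-1) ^ n * q ^ i * α
def coefB (i : ℕ) : k := q ^ (n - i - 1) + (-1) ^ n * β
def coefC (i : ℕ) : k := q ^ (n - i - 1) + (-1) ^ (n + 1) * q * β
def coefE (i : ℕ) : k := -q + (-1) ^ n * q ^ i * α

lemma col_zero (i : Fin n) :
    (Dmat k q α β n).col (i, 0) =
      Pi.single (i.castSucc, 1) (coefA q α n i) + Pi.single (i.succ, 2) (coefB q β n i) := by
  ext ⟨j, b⟩
  fin_cases b <;>
    simp [Dmat, Matrix.col, coefA, coefB, Pi.single_apply, Prod.ext_iff, Fin.ext_iff]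

lemma col_one (i : Fin n) :
    (Dmat k q α β n).col (i, 1) = Pi.single (i.succ, 3) (coefC q β n i) := by
  ext ⟨j, b⟩
  fin_cases b <;> simp [Dmat, Matrix.col, coefC, Pi.single_apply, Prod.ext_iff, Fin.ext_iff]

lemma col_two (i : Fin n) :
    (Dmat k q α β n).col (i, 2) = Pi.single (i.castSucc, 3) (coefE q α n i) := by
  ext ⟨j, b⟩
  fin_cases b <;> simp [Dmat, Matrix.col, coefE, Pi.single_apply, Prod.ext_iff, Fin.ext_iff]

lemma col_three (i : Fin n) : (Dmat k q α β n).col (i, 3) = 0 := by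
  ext ⟨j, b⟩
  fin_cases b <;> simp [Dmat, Matrix.col]

/-- `yx eⱼ` (row `(j, 3)`) is in the image of `dₙ` iff some column `(i, 1)` or `(i, 2)` has a
nonzero entry in that row. -/
def HitsYX (j : Fin (n + 1)) : Prop :=
  ∃ i : Fin n, (i.succ = j ∧ coefC q β n i ≠ 0) ∨ (i.castSucc = j ∧ coefE q α n i ≠ 0)

noncomputable def spanFamily :
    Fin n ⊕ {j // HitsYX q α β n j} → (Fin (n + 1) × Fin 4 → k) :=
  Sum.elim (fun i => (Dmat k q α β n).col (i, 0)) (fun j => Pi.single (j.1, 3) 1)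

lemma span_range_col :
    Submodule.span k (Set.range (Dmat k q α β n).col) =
      Submodule.span k (Set.range (spanFamily q α β n)) := by
  set S := Submodule.span k (Set.range (spanFamily q α β n))
  have hsingle : ∀ j, HitsYX q α β n j → Pi.single (j, (3 : Fin 4)) (1 : k) ∈ S :=
    fun j hj => Submodule.subset_span ⟨Sum.inr ⟨j, hj⟩, rfl⟩
  apply le_antisymm <;> rw [Submodule.span_le]
  · rintro _ ⟨⟨i, b⟩, rfl⟩
    fin_cases b
    · exact Submodule.subset_span ⟨Sum.inl i, rfl⟩
    · show (Dmat k q α β n).col (i, 1) ∈ S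
      rw [col_one]
      by_cases hC : coefC q β n i = 0
      · rw [hC, Pi.single_zero]; exact S.zero_mem
      · rw [Pi.single_mem_iff_single_one_mem _ hC]
        exact hsingle _ ⟨i, Or.inl ⟨rfl, hC⟩⟩
    · show (Dmat k q α β n).col (i, 2) ∈ S
      rw [col_two]
      by_cases hE : coefE q α n i = 0
      · rw [hE, Pi.single_zero]; exact S.zero_mem
      · rw [Pi.single_mem_iff_single_one_mem _ hE]
        exact hsingle _ ⟨i, Or.inr ⟨rfl, hE⟩⟩
    · show (Dmat k q α β n).col (i, 3) ∈ S
      rw [col_three]; exact S.zero_mem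
  · rintro _ ⟨i | ⟨j, hj⟩, rfl⟩
    · exact Submodule.subset_span ⟨(i, 0), rfl⟩
    rw [SetLike.mem_coe, spanFamily, Sum.elim_inr]
    obtain ⟨i, ⟨rfl, hC⟩ | ⟨rfl, hE⟩⟩ := hj
    · rw [← Pi.single_mem_iff_single_one_mem _ hC, ← col_one]
      exact Submodule.subset_span ⟨(i, 1), rfl⟩
    · rw [← Pi.single_mem_iff_single_one_mem _ hE, ← col_two]
      exact Submodule.subset_span ⟨(i, 2), rfl⟩

lemma linearIndependent_spanFamily
    (hAB : ∀ i : Fin n, coefA q α n i ≠ 0 ∨ coefB q β n i ≠ 0) :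
    LinearIndependent k (spanFamily q α β n) := by
  classical
  -- pivots: `xeᵢ` for `eᵢ` (or `ye_{i+1}` when `coefA` vanishes), `yx eⱼ` for itself
  refine linearIndependent_of_pivot
    (Sum.elim (fun i => if coefA q α n i = 0 then (i.succ, 2) else (i.castSucc, 1))
      (fun j => (j.1, 3))) ?_ ?_
  · rintro (i | j)
    · by_cases hA : coefA q α n i = 0
      · simpa [spanFamily, col_zero, hA] using (hAB i).resolve_left (not_not.2 hA)
      · simp [spanFamily, col_zero, hA]
    · simp [spanFamily]
  · rintro (i | j) (i' | j') hne <;>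
      simp only [spanFamily, col_zero, Sum.elim_inl, Sum.elim_inr, Pi.add_apply, Pi.single_apply]
    · have hii' : i' ≠ i := fun h => hne (congrArg _ h)
      split_ifs <;> simp_all [Prod.ext_iff]
    · split_ifs <;> simp_all [Prod.ext_iff]
    · simp
    · have hjj' : (j' : Fin (n + 1)) ≠ j := fun h => hne (congrArg _ (Subtype.ext h))
      simp [Prod.ext_iff, hjj'.symm]

end Columns

end Dmat

theorem finrank_range_dMap {k : Type} [Field k] (q α β : k) (n : ℕ)
    (hAB : ∀ i : Fin n, Dmat.coefA q α n i ≠ 0 ∨ Dmat.coefB q β n i ≠ 0) :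
    Module.finrank k (LinearMap.range (dMap k q α β n)) =
      n + Nat.card {j // Dmat.HitsYX q α β n j} := by
  classical
  rw [dMap, Matrix.range_mulVecLin, Dmat.span_range_col,
    finrank_span_eq_card (Dmat.linearIndependent_spanFamily q α β n hAB), Fintype.card_sum,
    Fintype.card_fin, Nat.card_eq_fintype_card]

namespace Dmat

variable {k : Type} [Field k] {q : k}

lemma coefA_ne_zero_or_coefB_ne_zero (hq : q ≠ 0) (hq' : ∀ m : ℕ, 0 < m → q ^ m ≠ 1)
    {t n i : ℕ} (hn : n ≠ 2 * t + 1) (hi : i < n) :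
    coefA q (q ^ (-(t : ℤ))) n i ≠ 0 ∨ coefB q (q ^ t) n i ≠ 0 := by
  rw [← not_and_or]
  rintro ⟨hA, hB⟩
  unfold coefA at hA
  unfold coefB at hB
  set s : k := (-1) ^ n
  have hs : s * s = 1 := neg_one_pow_mul_self n
  have ha := zpow_neg_natCast_mul_pow hq t
  have e1 : s * q ^ i = -q ^ t := by linear_combination q ^ t * hA - s * q ^ i * ha
  have e2 : s * q ^ (n - i - 1) = -q ^ t := by linear_combination s * hB - q ^ t * hs
  have hsym : i = n - i - 1 := pow_injective_of_pow_ne_one hq hq'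
    (mul_left_cancel₀ (left_ne_zero_of_mul_eq_one hs) (e1.trans e2.symm))
  have hodd : s = -1 := Odd.neg_one_pow ⟨i, by omega⟩
  have hit : i = t := pow_injective_of_pow_ne_one hq hq' (by simpa [hodd] using e1)
  omega

lemma coefE_ne_zero (hq : q ≠ 0) (hq' : ∀ m : ℕ, 0 < m → q ^ m ≠ 1) {t n i : ℕ}
    (hi : i ≠ t + 1) : coefE q (q ^ (-(t : ℤ))) n i ≠ 0 := by
  intro hE
  unfold coefE at hE
  set s : k := (-1) ^ n
  have hs : s * s = 1 := neg_one_pow_mul_self n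
  have ha := zpow_neg_natCast_mul_pow hq t
  have e1 : s * q ^ i = q ^ (t + 1) := by linear_combination q ^ t * hE - s * q ^ i * ha
  have e2 : q ^ (i + i) = q ^ ((t + 1) + (t + 1)) := by
    linear_combination (s * q ^ i + q ^ (t + 1)) * e1 - q ^ (i + i) * hs
  have := pow_injective_of_pow_ne_one hq hq' e2
  omega

lemma coefC_ne_zero (hq : q ≠ 0) (hq' : ∀ m : ℕ, 0 < m → q ^ m ≠ 1) {t n i : ℕ}
    (hi : n - i - 1 ≠ t + 1) : coefC q (q ^ t) n i ≠ 0 := by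
  intro hC
  unfold coefC at hC
  set s : k := (-1) ^ (n + 1)
  have hs : s * s = 1 := neg_one_pow_mul_self (n + 1)
  have e1 : q ^ (n - i - 1) = -(s * q ^ (t + 1)) := by linear_combination hC
  have e2 : q ^ ((n - i - 1) + (n - i - 1)) = q ^ ((t + 1) + (t + 1)) := by
    linear_combination
      (q ^ (n - i - 1) - s * q ^ (t + 1)) * e1 + q ^ (t + 1) * q ^ (t + 1) * hs
  have := pow_injective_of_pow_ne_one hq hq' e2
  omega

lemma coefC_critical (t : ℕ) : coefC q (q ^ t) (2 * t + 2) t = 0 := by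
  have hodd : (-1 : k) ^ (2 * t + 2 + 1) = -1 := Odd.neg_one_pow ⟨t + 1, by ring⟩
  rw [coefC, hodd, show 2 * t + 2 - t - 1 = t + 1 by omega]
  ring

lemma coefE_critical (hq : q ≠ 0) (t : ℕ) :
    coefE q (q ^ (-(t : ℤ))) (2 * t + 2) (t + 1) = 0 := by
  have heven : (-1 : k) ^ (2 * t + 2) = 1 := Even.neg_one_pow ⟨t + 1, by ring⟩
  rw [coefE, heven]
  linear_combination q * zpow_neg_natCast_mul_pow hq t

lemma hitsYX_of_le (hq : q ≠ 0) (hq' : ∀ m : ℕ, 0 < m → q ^ m ≠ 1) {t n : ℕ}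
    (hn : 2 * t + 2 ≤ n) (j : Fin (n + 1)) (hj : ¬(n = 2 * t + 2 ∧ (j : ℕ) = t + 1)) :
    HitsYX q (q ^ (-(t : ℤ))) (q ^ t) n j := by
  rcases Nat.eq_zero_or_pos j with hj0 | hjpos
  · exact ⟨⟨0, by omega⟩, Or.inr ⟨Fin.ext (by simp [hj0]), coefE_ne_zero hq hq' (by simp)⟩⟩
  by_cases hC : n - j = t + 1
  · exact ⟨⟨j, by omega⟩, Or.inr ⟨rfl, coefE_ne_zero hq hq' (by dsimp only; omega)⟩⟩
  · exact ⟨⟨j - 1, by omega⟩, Or.inl ⟨Fin.ext (by simp; omega),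
      coefC_ne_zero hq hq' (by simp only; omega)⟩⟩

lemma not_hitsYX_critical (hq : q ≠ 0) (t : ℕ) :
    ¬HitsYX q (q ^ (-(t : ℤ))) (q ^ t) (2 * t + 2) ⟨t + 1, by omega⟩ := by
  rintro ⟨i, ⟨hi, hC⟩ | ⟨hi, hE⟩⟩
  · rw [show (i : ℕ) = t by simpa [Fin.ext_iff] using hi] at hC
    exact hC (coefC_critical t)
  · rw [show (i : ℕ) = t + 1 by simpa [Fin.ext_iff] using hi] at hE
    exact hE (coefE_critical hq t)

end Dmat

section Twisted

open Dmat

variable {k : Type} [Field k] {q : k}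

theorem finrank_range_dMap_of_lt (hq : q ≠ 0) (hq' : ∀ m : ℕ, 0 < m → q ^ m ≠ 1) {t n : ℕ}
    (hn : 2 * t + 2 < n) :
    Module.finrank k (LinearMap.range (dMap k q (q ^ (-(t : ℤ))) (q ^ t) n)) = 2 * n + 1 := by
  rw [finrank_range_dMap _ _ _ _
      fun i => coefA_ne_zero_or_coefB_ne_zero hq hq' (by omega) i.isLt,
    Nat.card_congr (Equiv.subtypeUnivEquiv fun j => hitsYX_of_le hq hq' hn.le j (by omega)),
    Nat.card_fin]
  ring

theorem finrank_range_dMap_critical (hq : q ≠ 0) (hq' : ∀ m : ℕ, 0 < m → q ^ m ≠ 1) (t : ℕ) :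
    Module.finrank k (LinearMap.range (dMap k q (q ^ (-(t : ℤ))) (q ^ t) (2 * t + 2))) =
      4 * t + 4 := by
  have hhit : ∀ j, HitsYX q (q ^ (-(t : ℤ))) (q ^ t) (2 * t + 2) j ↔ j ≠ ⟨t + 1, by omega⟩ :=
    fun j => ⟨fun hj hjt => not_hitsYX_critical hq t (hjt ▸ hj),
      fun hjt => hitsYX_of_le hq hq' le_rfl j fun h => hjt (Fin.ext h.2)⟩
  rw [finrank_range_dMap _ _ _ _
      fun i => coefA_ne_zero_or_coefB_ne_zero hq hq' (by omega) i.isLt,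
    Nat.card_congr (Equiv.subtypeEquivRight hhit), Nat.card_eq_fintype_card,
    Fintype.card_subtype_compl, Fintype.card_fin, Fintype.card_subtype_eq]
  omega

end Twisted

theorem finrank_ker_dMap {k : Type} [Field k] (q α β : k) (n : ℕ) :
    Module.finrank k (LinearMap.ker (dMap k q α β n)) =
      4 * n - Module.finrank k (LinearMap.range (dMap k q α β n)) := by
  have h := LinearMap.finrank_range_add_finrank_ker (dMap k q α β n)
  simp only [Module.finrank_fintype_fun_eq_card, Fintype.card_prod, Fintype.card_fin] at h
  omega

/-- for each `t ∈ ℕ`, let `ψ_t(x) = q^{−t}x`, `ψ_t(y) = q^t y` and let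
`dₙ^{(t)}` be the corresponding differential (parameters `α = q^{−t}`, `β = q^t`).
Then `Dₙ := dim Ker d_{n+1}^{(t)} − dim Im dₙ^{(t)} = dim HHⁿ(Λ, M_t)` satisfies
`D_{2t+2} ≠ 0` but `Dₙ = 0` for all `n > 2t+2`; hence
`Ext_{Λᵉ}ⁿ(Λ, M_t) = 0` for `n > 2t+2` while `Ext_{Λᵉ}^{2t+2}(Λ, M_t) ≠ 0`,
contradicting Auslander's conjecture for `Λᵉ`. -/
theorem stmt17 (k : Type) [Field k] (q : k) (hq : q ≠ 0)
    (hq' : ∀ m : ℕ, 0 < m → q ^ m ≠ 1) (t : ℕ) :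
    Module.finrank k
        ↥(LinearMap.ker (dMap k q (q ^ (-(t : ℤ))) (q ^ t) (2 * t + 2 + 1))) ≠
      Module.finrank k
        ↥(LinearMap.range (dMap k q (q ^ (-(t : ℤ))) (q ^ t) (2 * t + 2))) ∧
    ∀ n : ℕ, 2 * t + 2 < n →
      Module.finrank k
          ↥(LinearMap.ker (dMap k q (q ^ (-(t : ℤ))) (q ^ t) (n + 1))) =
        Module.finrank k
          ↥(LinearMap.range (dMap k q (q ^ (-(t : ℤ))) (q ^ t) n)) := by
  refine ⟨?_, fun n hn => ?_⟩
  · rw [finrank_ker_dMap, finrank_range_dMap_of_lt hq hq' (by omega),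
      finrank_range_dMap_critical hq hq']
    omega
  · rw [finrank_ker_dMap, finrank_range_dMap_of_lt hq hq' (by omega),
      finrank_range_dMap_of_lt hq hq' hn]
    omega
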